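/- arXiv:2207.05599 — 3 statements merged into one kernel-verified Lean document; each statement's English description precedes it below -/
import Mathlib

section
/- Let n ≥ 1 and let λ be a partition of n. Then the number of leaves of the game tree of Downright on λ is at least 1, and the number of leaves of the game tree of LCTR on λ is at least n + 1; moreover both bounds are attained by the one-row partition (n). -/
/-- The subpartition `λ[i,j]`: drop the first `i` rows, subtract `j` from each
remaining row, and delete all nonpositive entries. -/
def Subpart (l : List ℕ) (i j : ℕ) : List ℕ :=
  ((l.drop i).map (fun x => x - j)).filter (fun x => x ≠ 0)

/-- A partition: a nonincreasing finite list of positive integers. -/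
def IsPartition (l : List ℕ) : Prop :=
  l.Pairwise (· ≥ ·) ∧ ∀ x ∈ l, 0 < x

/-- Minimum excluded value of a finite set of naturals. -/
noncomputable def mex (s : Finset ℕ) : ℕ := sInf {n : ℕ | n ∉ s}

lemma measure_filter_le (l : List ℕ) :
    (l.filter (fun x => x ≠ 0)).sum + (l.filter (fun x => x ≠ 0)).length
      ≤ l.sum + l.length := by
  induction l with
  | nil => simp
  | cons a t ih =>
    simp only [List.filter_cons, decide_eq_true_eq, List.sum_cons, List.length_cons]
    by_cases h : a ≠ 0
    · rw [if_pos h]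
      simp only [List.sum_cons, List.length_cons]
      omega
    · rw [if_neg h]
      omega

lemma measure_mapsub_le (l : List ℕ) :
    ((l.map (fun x => x - 1)).filter (fun x => x ≠ 0)).sum
      + ((l.map (fun x => x - 1)).filter (fun x => x ≠ 0)).length ≤ l.sum := by
  induction l with
  | nil => simp
  | cons a t ih =>
    simp only [List.map_cons, List.filter_cons, decide_eq_true_eq, List.sum_cons]
    by_cases h : a - 1 ≠ 0
    · rw [if_pos h]
      simp only [List.sum_cons, List.length_cons]
      omega
    · rw [if_neg h]
      omega

lemma subpart10_lt (a : ℕ) (t : List ℕ) :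
    (Subpart (a :: t) 1 0).sum + (Subpart (a :: t) 1 0).length
      < (a :: t).sum + (a :: t).length := by
  have h : Subpart (a :: t) 1 0 = t.filter (fun x => x ≠ 0) := by
    simp [Subpart]
  rw [h]
  have := measure_filter_le t
  simp only [List.sum_cons, List.length_cons]
  omega

lemma subpart01_lt (a : ℕ) (t : List ℕ) :
    (Subpart (a :: t) 0 1).sum + (Subpart (a :: t) 0 1).length
      < (a :: t).sum + (a :: t).length := by
  have h : Subpart (a :: t) 0 1
      = ((a :: t).map (fun x => x - 1)).filter (fun x => x ≠ 0) := by
    simp [Subpart]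
  rw [h]
  have := measure_mapsub_le (a :: t)
  have hlen : 0 < (a :: t).length := by simp
  omega

/-- Sprague–Grundy values of the LCTR game. -/
noncomputable def SGL : List ℕ → ℕ
  | [] => 0
  | a :: t => mex {SGL (Subpart (a :: t) 1 0), SGL (Subpart (a :: t) 0 1)}
  termination_by l => l.sum + l.length
  decreasing_by
  · exact subpart10_lt a t
  · exact subpart01_lt a t

/-- Sprague–Grundy values of the Downright game (only meaningful on nonempty
partitions; the value on `[]` is a junk value). -/
noncomputable def SGD : List ℕ → ℕ
  | [] => 0
  | a :: t =>
      mex ((if t = [] then (∅ : Finset ℕ) else {SGD (Subpart (a :: t) 1 0)}) ∪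
           (if a ≤ 1 then (∅ : Finset ℕ) else {SGD (Subpart (a :: t) 0 1)}))
  termination_by l => l.sum + l.length
  decreasing_by
  · exact subpart10_lt a t
  · exact subpart01_lt a t

/-- Durfee length: the largest `ℓ` with `λ_ℓ ≥ ℓ`. -/
def durfee (l : List ℕ) : ℕ :=
  Nat.findGreatest (fun k => k ≤ l.getD (k - 1) 0) l.length

/-- The conjugate partition. -/
def conj (l : List ℕ) : List ℕ :=
  (List.range (l.headD 0)).map (fun i => (l.filter (fun x => i + 1 ≤ x)).length)

/-- P-positions of misère LCTR. -/
def PmLCTR : List ℕ → Prop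
  | [] => False
  | a :: t => ¬ PmLCTR (Subpart (a :: t) 1 0) ∧ ¬ PmLCTR (Subpart (a :: t) 0 1)
  termination_by l => l.sum + l.length
  decreasing_by
  · exact subpart10_lt a t
  · exact subpart01_lt a t

/-- Number of nodes in the game tree of LCTR. -/
def nodesL : List ℕ → ℕ
  | [] => 1
  | a :: t => 1 + nodesL (Subpart (a :: t) 1 0) + nodesL (Subpart (a :: t) 0 1)
  termination_by l => l.sum + l.length
  decreasing_by
  · exact subpart10_lt a t
  · exact subpart01_lt a t

/-- Number of leaves in the game tree of LCTR. -/
def leavesL : List ℕ → ℕ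
  | [] => 1
  | a :: t => leavesL (Subpart (a :: t) 1 0) + leavesL (Subpart (a :: t) 0 1)
  termination_by l => l.sum + l.length
  decreasing_by
  · exact subpart10_lt a t
  · exact subpart01_lt a t

/-- Number of nodes in the game tree of Downright (junk value `0` on `[]`). -/
def nodesD : List ℕ → ℕ
  | [] => 0
  | a :: t =>
      1 + (if t = [] then 0 else nodesD (Subpart (a :: t) 1 0))
        + (if a ≤ 1 then 0 else nodesD (Subpart (a :: t) 0 1))
  termination_by l => l.sum + l.length
  decreasing_by
  · exact subpart10_lt a t
  · exact subpart01_lt a t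

/-- Number of leaves in the game tree of Downright (junk value `0` on `[]`). -/
def leavesD : List ℕ → ℕ
  | [] => 0
  | a :: t =>
      if t = [] ∧ a ≤ 1 then 1
      else (if t = [] then 0 else leavesD (Subpart (a :: t) 1 0))
        + (if a ≤ 1 then 0 else leavesD (Subpart (a :: t) 0 1))
  termination_by l => l.sum + l.length
  decreasing_by
  · exact subpart10_lt a t
  · exact subpart01_lt a t

/-- The staircase partition `(n, n-1, …, 1)`. -/
def staircase (n : ℕ) : List ℕ := (List.range n).map (fun k => n - k)

/-- The gamma partition `Γ_{r,c} = (c, 1, …, 1)` with `r` parts. -/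
def gammaPart (r c : ℕ) : List ℕ := c :: List.replicate (r - 1) 1

/-- The rectangular partition `R_{r,c} = (c, …, c)` with `r` parts. -/
def rectPart (r c : ℕ) : List ℕ := List.replicate r c
lemma sum_filter_ne (l : List ℕ) : (l.filter (fun x => x ≠ 0)).sum = l.sum := by
  induction l with
  | nil => simp
  | cons a t ih =>
    simp only [List.filter_cons, decide_eq_true_eq, List.sum_cons]
    by_cases h : a ≠ 0
    · rw [if_pos h]; simp only [List.sum_cons]; omega
    · rw [if_neg h]; omega

lemma sub10_eq (a : ℕ) (t : List ℕ) :
    Subpart (a :: t) 1 0 = t.filter (fun x => x ≠ 0) := by simp [Subpart]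

lemma sub01_sum (a : ℕ) (t : List ℕ) : a - 1 ≤ (Subpart (a :: t) 0 1).sum := by
  have h : Subpart (a :: t) 0 1
      = ((a :: t).map (fun x => x - 1)).filter (fun x => x ≠ 0) := by simp [Subpart]
  rw [h, sum_filter_ne]
  simp only [List.map_cons, List.sum_cons]
  omega

lemma leavesL_ge (l : List ℕ) : l.sum + 1 ≤ leavesL l := by
  induction l using leavesL.induct with
  | case1 => simp [leavesL]
  | case2 a t ih1 ih2 =>
    rw [leavesL]
    have h1 : (Subpart (a :: t) 1 0).sum = t.sum := by rw [sub10_eq, sum_filter_ne]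
    have h2 := sub01_sum a t
    simp only [List.sum_cons]
    omega
lemma leavesD_pos (l : List ℕ) : l ≠ [] → (∀ x ∈ l, 0 < x) → 1 ≤ leavesD l := by
  induction l using leavesD.induct with
  | case1 => intro h; exact absurd rfl h
  | case2 a t h =>
    intro _ _
    rw [leavesD, if_pos h]
  | case3 a t h ih1 ih2 =>
    intro hne hpos
    rw [leavesD, if_neg h]
    by_cases ht : t = []
    · have ha : ¬ a ≤ 1 := by tauto
      rw [if_pos ht, if_neg ha]
      have hsub : Subpart (a :: t) 0 1 = [a - 1] := by
        subst ht; simp [Subpart]; omega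
      have := ih2 (by rw [hsub]; simp) (by rw [hsub]; intro x hx; simp at hx; omega)
      omega
    · rw [if_neg ht]
      have hsub : Subpart (a :: t) 1 0 = t := by
        rw [sub10_eq]
        refine List.filter_eq_self.mpr (fun x hx => ?_)
        have := hpos x (List.mem_cons_of_mem a hx)
        simp only [ne_eq, decide_eq_true_eq]
        omega
      have := ih1 (by rw [hsub]; exact ht)
        (by rw [hsub]; intro x hx; exact hpos x (List.mem_cons_of_mem a hx))
      by_cases ha : a ≤ 1 <;> simp [ha] <;> omega

lemma leavesD_row (n : ℕ) (hn : 1 ≤ n) : leavesD [n] = 1 := by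
  induction n with
  | zero => omega
  | succ m ih =>
    rw [leavesD]
    by_cases hm : m = 0
    · subst hm; norm_num
    · rw [if_neg (by omega), if_pos rfl, if_neg (by omega)]
      have hsub : Subpart [m + 1] 0 1 = [m] := by simp [Subpart]; omega
      rw [hsub, ih (by omega)]

lemma leavesL_nil : leavesL [] = 1 := by rw [leavesL]

lemma leavesL_row (n : ℕ) (hn : 1 ≤ n) : leavesL [n] = n + 1 := by
  induction n with
  | zero => omega
  | succ m ih =>
    rw [leavesL]
    have h1 : Subpart [m + 1] 1 0 = [] := by simp [Subpart]
    by_cases hm : m = 0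
    · subst hm
      have h2 : Subpart [1] 0 1 = [] := by simp [Subpart]
      rw [h1, h2, leavesL_nil]
    · have h2 : Subpart [m + 1] 0 1 = [m] := by simp [Subpart]; omega
      rw [h1, h2, ih (by omega), leavesL_nil]; omega

/-- for every partition of `n ≥ 1`, the game tree of Downright has at
least `1` leaf and the game tree of LCTR has at least `n + 1` leaves; both bounds
are attained by the one-row partition `(n)`. -/
theorem stmt17 (n : ℕ) (hn : 1 ≤ n) (l : List ℕ) (hp : IsPartition l)
    (hs : l.sum = n) :
    (1 ≤ leavesD l ∧ n + 1 ≤ leavesL l) ∧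
    (leavesD [n] = 1 ∧ leavesL [n] = n + 1) := by
  have hne : l ≠ [] := by
    intro h; subst h; simp at hs; omega
  refine ⟨⟨leavesD_pos l hne hp.2, ?_⟩, leavesD_row n hn, leavesL_row n hn⟩
  have := leavesL_ge l
  omega
end

section
/- For all integers r ≥ 1 and c ≥ 1, the number of leaves of the game tree of LCTR on the rectangular partition R_{r,c} equals C(r+c, r), where C denotes the binomial coefficient. -/
lemma sub10_rect (r c : ℕ) (hc : 1 ≤ c) :
    Subpart (c :: List.replicate r c) 1 0 = List.replicate r c := by
  simp only [Subpart, List.drop_one, List.tail_cons, Nat.sub_zero, List.map_id']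
  rw [List.filter_eq_self]
  intro x hx
  rw [List.eq_of_mem_replicate hx]
  simp; omega

lemma sub01_rect (r c : ℕ) (hc : 2 ≤ c) :
    Subpart (c :: List.replicate r c) 0 1 = List.replicate (r + 1) (c - 1) := by
  simp only [Subpart, List.drop_zero, List.map_cons, List.map_replicate]
  rw [show (c - 1) :: List.replicate r (c - 1) = List.replicate (r+1) (c-1) from
      List.replicate_succ.symm]
  rw [List.filter_eq_self]
  intro x hx
  rw [List.eq_of_mem_replicate hx]
  simp; omega

lemma sub01_rect_one (r : ℕ) :
    Subpart (1 :: List.replicate r 1) 0 1 = [] := by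
  simp only [Subpart, List.drop_zero, List.map_cons, List.map_replicate]
  simp

lemma rect_key : ∀ n r c, r + c = n → 1 ≤ r → 1 ≤ c →
    leavesL (rectPart r c) = Nat.choose (r + c) r := by
  intro n
  induction n using Nat.strong_induction_on with
  | _ n ih =>
    intro r c hn hr hc
    obtain ⟨r', rfl⟩ : ∃ r', r = r' + 1 := ⟨r - 1, by omega⟩
    have hrect : rectPart (r' + 1) c = c :: List.replicate r' c := by
      simp [rectPart, List.replicate_succ]
    rw [hrect, leavesL, sub10_rect r' c hc]
    by_cases hc2 : 2 ≤ c
    · rw [sub01_rect r' c hc2]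
      have h01 : leavesL (List.replicate (r' + 1) (c - 1))
          = Nat.choose (r' + 1 + (c - 1)) (r' + 1) := by
        have := ih (r' + 1 + (c - 1)) (by omega) (r' + 1) (c - 1) rfl (by omega) (by omega)
        simpa [rectPart] using this
      have h10 : leavesL (List.replicate r' c) = Nat.choose (r' + c) r' := by
        rcases Nat.eq_zero_or_pos r' with h0 | h0
        · subst h0; simp [leavesL]
        · have := ih (r' + c) (by omega) r' c rfl h0 hc
          simpa [rectPart] using this
      have hcc : r' + 1 + (c - 1) = r' + c := by omega
      rw [hcc] at h01
      rw [h01, h10]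
      have pascal : (r' + 1 + c).choose (r' + 1)
          = (r' + c).choose r' + (r' + c).choose (r' + 1) := by
        rw [show r' + 1 + c = r' + c + 1 by omega]
        exact Nat.choose_succ_succ (r' + c) r'
      omega
    · have hc1 : c = 1 := by omega
      subst hc1
      rw [sub01_rect_one r']
      have h10 : leavesL (List.replicate r' 1) = Nat.choose (r' + 1) r' := by
        rcases Nat.eq_zero_or_pos r' with h0 | h0
        · subst h0; simp [leavesL]
        · have := ih (r' + 1) (by omega) r' 1 rfl h0 (by omega)
          simpa [rectPart] using this
      rw [h10]
      simp [leavesL, Nat.choose_succ_self_right]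

/-- the game tree of LCTR on the rectangle `R_{r,c}` has
`C(r+c, r)` leaves. -/
theorem stmt18 (r c : ℕ) (hr : 1 ≤ r) (hc : 1 ≤ c) :
    leavesL (rectPart r c) = Nat.choose (r + c) r := by
  exact rect_key (r + c) r c rfl hr hc
end

section
/- Let n ≥ 1 and let λ be a partition of n. Then the number of distinct positions of the LCTR game on λ, i.e. the cardinality of the set {λ[i,j] : i, j ≥ 0} of all subpartitions of λ (including the empty partition), is at most n + 1; and the number of distinct positions of the Downright game on λ, i.e. the cardinality of the set of nonempty subpartitions {λ[i,j] : i, j ≥ 0, λ[i,j] ≠ ⟨⟩}, is at most n. -/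
lemma sum_getD_aux (l : List ℕ) :
    ∑ i ∈ Finset.range l.length, l.getD i 0 = l.sum := by
  induction l with
  | nil => simp
  | cons a t ih =>
    rw [List.length_cons, Finset.sum_range_succ']
    simp only [List.getD_cons_succ, List.getD_cons_zero, ih, List.sum_cons]
    omega

lemma cell_of_nonempty {l : List ℕ} (hp : IsPartition l) {i j : ℕ}
    (h : Subpart l i j ≠ []) : i < l.length ∧ j < l.getD i 0 := by
  obtain ⟨x, hx⟩ := List.exists_mem_of_ne_nil _ h
  rw [Subpart, List.mem_filter, List.mem_map] at hx
  obtain ⟨⟨y, hy, rfl⟩, hx0⟩ := hx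
  have hjy : j < y := by
    simp only [decide_eq_true_eq] at hx0; omega
  have hdne : l.drop i ≠ [] := List.ne_nil_of_mem hy
  have hil : i < l.length := by
    by_contra hc
    exact hdne (List.drop_eq_nil_of_le (by omega))
  refine ⟨hil, ?_⟩
  obtain ⟨k, hk, hky⟩ := List.getElem_of_mem hy
  have hik : i + k < l.length := by rw [List.length_drop] at hk; omega
  rw [List.getElem_drop] at hky
  have hle : l[i] ≥ l[i + k] := by
    rcases Nat.eq_zero_or_pos k with rfl | hk0
    · simp
    · have := List.pairwise_iff_get.mp hp.1 ⟨i, by omega⟩ ⟨i + k, by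
        exact hik⟩ (by simp; omega)
      simpa using this
  have : l.getD i 0 = l[i] := List.getD_eq_getElem l 0 hil
  omega

/-- for a partition of `n ≥ 1`, the number of distinct positions of
LCTR (all subpartitions, including the empty one) is at most `n + 1`, and the
number of distinct positions of Downright (the nonempty subpartitions) is at
most `n`. -/
theorem stmt19 (n : ℕ) (hn : 1 ≤ n) (l : List ℕ) (hp : IsPartition l)
    (hs : l.sum = n) :
    Set.ncard {p : List ℕ | ∃ i j : ℕ, Subpart l i j = p} ≤ n + 1 ∧
    Set.ncard {p : List ℕ | p ≠ [] ∧ ∃ i j : ℕ, Subpart l i j = p} ≤ n := by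
  classical
  have hTsub : {p : List ℕ | p ≠ [] ∧ ∃ i j : ℕ, Subpart l i j = p} ⊆
      ↑(((Finset.range l.length).biUnion
          (fun i => ({i} : Finset ℕ) ×ˢ Finset.range (l.getD i 0))).image
        (fun q : ℕ × ℕ => Subpart l q.1 q.2)) := by
    rintro p ⟨hpne, i, j, rfl⟩
    obtain ⟨h1, h2⟩ := cell_of_nonempty hp hpne
    simp only [Finset.coe_image, Set.mem_image, Finset.mem_coe,
      Finset.mem_biUnion, Finset.mem_range, Finset.mem_product,
      Finset.mem_singleton]
    exact ⟨(i, j), ⟨i, h1, rfl, by simpa using h2⟩, rfl⟩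
  have hScard : Set.ncard {p : List ℕ | p ≠ [] ∧ ∃ i j : ℕ, Subpart l i j = p} ≤ n := by
    have hle := Set.ncard_le_ncard hTsub (Finset.finite_toSet _)
    rw [Set.ncard_coe_finset] at hle
    have hcard : ((Finset.range l.length).biUnion
        (fun i => ({i} : Finset ℕ) ×ˢ Finset.range (l.getD i 0))).card = n := by
      rw [Finset.card_biUnion]
      · simp only [Finset.card_product, Finset.card_singleton, Finset.card_range, one_mul]
        rw [sum_getD_aux, hs]
      · intro x _ y _ hxy
        simp only [Finset.disjoint_left, Finset.mem_product, Finset.mem_singleton]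
        rintro ⟨a, b⟩ ⟨rfl, _⟩ ⟨h', _⟩
        exact hxy h'
    calc Set.ncard _ ≤ _ := hle
      _ ≤ _ := Finset.card_image_le
      _ = n := hcard
  have hSfin : {p : List ℕ | p ≠ [] ∧ ∃ i j : ℕ, Subpart l i j = p}.Finite :=
    Set.Finite.subset (Finset.finite_toSet _) hTsub
  refine ⟨?_, hScard⟩
  have hsub2 : {p : List ℕ | ∃ i j : ℕ, Subpart l i j = p} ⊆
      insert [] {p : List ℕ | p ≠ [] ∧ ∃ i j : ℕ, Subpart l i j = p} := by
    rintro p ⟨i, j, rfl⟩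
    by_cases hne : Subpart l i j = []
    · exact Or.inl hne
    · exact Or.inr ⟨hne, i, j, rfl⟩
  calc Set.ncard {p : List ℕ | ∃ i j : ℕ, Subpart l i j = p}
      ≤ Set.ncard (insert [] {p : List ℕ | p ≠ [] ∧ ∃ i j : ℕ, Subpart l i j = p}) :=
        Set.ncard_le_ncard hsub2 (hSfin.insert _)
    _ ≤ Set.ncard {p : List ℕ | p ≠ [] ∧ ∃ i j : ℕ, Subpart l i j = p} + 1 :=
        Set.ncard_insert_le _ _
    _ ≤ n + 1 := by omega
end
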